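/- Let a_L < 0 < a_U and c ∈ ℝ, and define F : (0, ∞) → ℝ by F(n) = logit( Φ(a_U·√n − c) − Φ(a_L·√n − c) ). Then F′(n) → (1/2)·min{a_U², a_L²} as n → ∞. -/

import Mathlib

open Real Filter MeasureTheory

/-- The standard normal density `φ(t) = (2π)^{-1/2} exp(-t²/2)`. -/
noncomputable def stdNormalPDF (t : ℝ) : ℝ :=
  (Real.sqrt (2 * Real.pi))⁻¹ * Real.exp (-(t ^ 2) / 2)

/-- The standard normal CDF `Φ(x) = ∫_{-∞}^x φ(t) dt`. -/
noncomputable def stdNormalCDF (x : ℝ) : ℝ :=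
  ∫ t in Set.Iic x, stdNormalPDF t

/-- `logit(x) = log(x) − log(1−x)`. -/
noncomputable def logit (x : ℝ) : ℝ :=
  Real.log x - Real.log (1 - x)

section Aux
open Set




lemma pdf_pos (t : ℝ) : 0 < stdNormalPDF t := by
  unfold stdNormalPDF
  positivity

lemma pdf_cont : Continuous stdNormalPDF := by
  unfold stdNormalPDF
  continuity

lemma pdf_eq (t : ℝ) : stdNormalPDF t = (Real.sqrt (2 * Real.pi))⁻¹ * Real.exp (-(1/2) * t ^ 2) := by
  unfold stdNormalPDF; ring_nf

lemma pdf_integrable : Integrable stdNormalPDF := by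
  have h := (integrable_exp_neg_mul_sq (by norm_num : (0:ℝ) < 1/2)).const_mul (Real.sqrt (2 * Real.pi))⁻¹
  refine h.congr (Eventually.of_forall fun x => ?_)
  rw [pdf_eq]

lemma pdf_integral : ∫ t, stdNormalPDF t = 1 := by
  have h : ∫ t : ℝ, Real.exp (-(1/2) * t ^ 2) = Real.sqrt (π / (1/2)) := integral_gaussian (1/2)
  have : ∫ t, stdNormalPDF t = (Real.sqrt (2 * Real.pi))⁻¹ * ∫ t : ℝ, Real.exp (-(1/2) * t ^ 2) := by
    rw [← integral_const_mul]
    congr 1; ext t; rw [pdf_eq]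
  rw [this, h]
  rw [show π / (1/2) = 2 * π by ring]
  rw [inv_mul_cancel₀ (by positivity : Real.sqrt (2*π) ≠ 0)]

lemma pdf_deriv (t : ℝ) : HasDerivAt stdNormalPDF (-t * stdNormalPDF t) t := by
  have h1 : HasDerivAt (fun t : ℝ => -(t ^ 2) / 2) (-t) t := by
    have := (hasDerivAt_pow 2 t).neg.div_const 2
    simpa using this.congr_deriv (by push_cast; ring)
  have h2 := (h1.exp).const_mul (Real.sqrt (2 * Real.pi))⁻¹
  refine h2.congr_deriv ?_
  unfold stdNormalPDF; ring

lemma cdf_hasDeriv (x : ℝ) : HasDerivAt stdNormalCDF (stdNormalPDF x) x := by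
  have key : ∀ y : ℝ, stdNormalCDF y = stdNormalCDF 0 + ∫ t in (0:ℝ)..y, stdNormalPDF t := by
    intro y
    rw [← intervalIntegral.integral_Iic_sub_Iic pdf_integrable.integrableOn pdf_integrable.integrableOn]
    unfold stdNormalCDF; ring
  have hd : HasDerivAt (fun y => ∫ t in (0:ℝ)..y, stdNormalPDF t) (stdNormalPDF x) x := by
    exact intervalIntegral.integral_hasDerivAt_right
      (pdf_integrable.intervalIntegrable)
      pdf_cont.aestronglyMeasurable.stronglyMeasurableAtFilter
      pdf_cont.continuousAt
  have h2 := (hd.const_add (stdNormalCDF 0))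
  have heq : (fun y => stdNormalCDF 0 + ∫ t in (0:ℝ)..y, stdNormalPDF t) = stdNormalCDF :=
    funext fun y => (key y).symm
  rwa [heq] at h2

lemma one_sub_cdf (x : ℝ) : 1 - stdNormalCDF x = ∫ t in Set.Ioi x, stdNormalPDF t := by
  have := intervalIntegral.integral_Iic_add_Ioi (b := x) pdf_integrable.integrableOn pdf_integrable.integrableOn
  rw [pdf_integral] at this
  unfold stdNormalCDF; linarith

lemma cdf_pos (x : ℝ) : 0 < stdNormalCDF x := by
  unfold stdNormalCDF
  apply setIntegral_pos_iff_support_of_nonneg_ae ?_ ?_ |>.mpr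
  · have hs : Function.support stdNormalPDF = Set.univ :=
      Set.eq_univ_of_forall fun t => ne_of_gt (pdf_pos t)
    rw [hs, Set.univ_inter]
    simp [Real.volume_Iic]
  · exact Eventually.of_forall fun t => (pdf_pos t).le
  · exact pdf_integrable.integrableOn

lemma cdf_lt_one (x : ℝ) : stdNormalCDF x < 1 := by
  have h := one_sub_cdf x
  have : 0 < ∫ t in Set.Ioi x, stdNormalPDF t := by
    apply setIntegral_pos_iff_support_of_nonneg_ae ?_ ?_ |>.mpr
    · have hs : Function.support stdNormalPDF = Set.univ :=
        Set.eq_univ_of_forall fun t => ne_of_gt (pdf_pos t)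
      rw [hs, Set.univ_inter]
      simp [Real.volume_Ioi]
    · exact Eventually.of_forall fun t => (pdf_pos t).le
    · exact pdf_integrable.integrableOn
  linarith

lemma pdf_tendsto_zero : Tendsto stdNormalPDF atTop (nhds 0) := by
  have h1 : Tendsto (fun t : ℝ => -(t ^ 2) / 2) atTop atBot := by
    apply Tendsto.atBot_div_const (by norm_num)
    exact tendsto_neg_atTop_atBot.comp (tendsto_pow_atTop (by norm_num : 2 ≠ 0))
  have h2 := (Real.tendsto_exp_atBot.comp h1).const_mul (Real.sqrt (2 * Real.pi))⁻¹
  rw [mul_zero] at h2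
  exact h2.congr fun t => by simp [stdNormalPDF, Function.comp]

lemma mul_pdf_integrable : Integrable (fun t => t * stdNormalPDF t) := by
  have h := (integrable_mul_exp_neg_mul_sq (by norm_num : (0:ℝ) < 1/2)).const_mul
    (Real.sqrt (2 * Real.pi))⁻¹
  refine h.congr (Eventually.of_forall fun t => ?_)
  unfold stdNormalPDF; ring_nf

lemma integral_mul_Ioi (x : ℝ) : ∫ t in Set.Ioi x, t * stdNormalPDF t = stdNormalPDF x := by
  have h := integral_Ioi_of_hasDerivAt_of_tendsto (f := fun t => -stdNormalPDF t)
    (f' := fun t => t * stdNormalPDF t) (a := x) (m := 0)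
    (pdf_cont.neg.continuousWithinAt)
    (fun t _ => by exact (pdf_deriv t).neg.congr_deriv (by ring))
    (mul_pdf_integrable.integrableOn)
    (by simpa using pdf_tendsto_zero.neg)
  simpa using h

lemma mill_upper {x : ℝ} (hx : 0 < x) : 1 - stdNormalCDF x ≤ stdNormalPDF x / x := by
  rw [one_sub_cdf]
  have h1 : ∫ t in Set.Ioi x, stdNormalPDF t ≤ ∫ t in Set.Ioi x, (t / x) * stdNormalPDF t := by
    apply setIntegral_mono_on pdf_integrable.integrableOn
      ((mul_pdf_integrable.const_mul x⁻¹).congr (Eventually.of_forall fun t => by ring)).integrableOn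
      measurableSet_Ioi
    intro t ht
    have htx : x ≤ t := le_of_lt ht
    have h1 : (1:ℝ) ≤ t / x := (one_le_div hx).mpr htx
    nlinarith [pdf_pos t]
  have h2 : ∫ t in Set.Ioi x, (t / x) * stdNormalPDF t = x⁻¹ * ∫ t in Set.Ioi x, t * stdNormalPDF t := by
    rw [← integral_const_mul]
    congr 1; ext t; ring
  rw [h2, integral_mul_Ioi] at h1
  calc ∫ t in Set.Ioi x, stdNormalPDF t ≤ x⁻¹ * stdNormalPDF x := h1
    _ = stdNormalPDF x / x := by ring

lemma aux_hasDeriv (t : ℝ) :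
    HasDerivAt (fun t => -(t * stdNormalPDF t / (1 + t ^ 2)))
      ((1 - 2 / (1 + t ^ 2) ^ 2) * stdNormalPDF t) t := by
  have hne : (1 + t ^ 2) ≠ 0 := by positivity
  have h1 : HasDerivAt (fun t : ℝ => t * stdNormalPDF t)
      (1 * stdNormalPDF t + t * (-t * stdNormalPDF t)) t := (hasDerivAt_id t).mul (pdf_deriv t)
  have h2 : HasDerivAt (fun t : ℝ => 1 + t ^ 2) (2 * t) t := by
    simpa using (hasDerivAt_pow 2 t).const_add 1
  have h3 := (h1.div h2 hne).neg
  refine h3.congr_deriv ?_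
  field_simp
  ring

lemma aux_integrable : Integrable (fun t => (1 - 2 / (1 + t ^ 2) ^ 2) * stdNormalPDF t) := by
  refine pdf_integrable.mono ?_ (Eventually.of_forall fun t => ?_)
  · have hc : Continuous fun t : ℝ => 1 - 2 / (1 + t ^ 2) ^ 2 :=
      continuous_const.sub (continuous_const.div (by continuity) (fun t => by positivity))
    exact (hc.mul pdf_cont).aestronglyMeasurable
  · have h1 : (0:ℝ) < (1 + t ^ 2) ^ 2 := by positivity
    have h2 : 2 / (1 + t ^ 2) ^ 2 ≤ 2 := by
      rw [div_le_iff₀ h1]; nlinarith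
    have h3 : 0 < 2 / (1 + t ^ 2) ^ 2 := by positivity
    have h4 : |1 - 2 / (1 + t ^ 2) ^ 2| ≤ 1 := by
      rw [abs_le]; constructor <;> linarith
    rw [Real.norm_eq_abs, Real.norm_eq_abs, abs_mul, abs_of_pos (pdf_pos t)]
    nlinarith [pdf_pos t, abs_nonneg (1 - 2 / (1 + t ^ 2) ^ 2)]

lemma aux_tendsto : Tendsto (fun t => -(t * stdNormalPDF t / (1 + t ^ 2))) atTop (nhds 0) := by
  rw [← neg_zero]
  apply Tendsto.neg
  apply squeeze_zero_norm' (a := stdNormalPDF)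
  · filter_upwards [eventually_ge_atTop (0:ℝ)] with t ht
    have h1 : (0:ℝ) < 1 + t ^ 2 := by positivity
    have hnn : 0 ≤ t * stdNormalPDF t / (1 + t ^ 2) := by
      apply div_nonneg _ h1.le
      exact mul_nonneg ht (pdf_pos t).le
    rw [Real.norm_eq_abs, abs_of_nonneg hnn, div_le_iff₀ h1]
    nlinarith [pdf_pos t, sq_nonneg (t - 1), mul_nonneg (sq_nonneg (t-1)) (pdf_pos t).le]
  · exact pdf_tendsto_zero

lemma integral_aux_Ioi (x : ℝ) :
    ∫ t in Set.Ioi x, (1 - 2 / (1 + t ^ 2) ^ 2) * stdNormalPDF t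
      = x * stdNormalPDF x / (1 + x ^ 2) := by
  have h := integral_Ioi_of_hasDerivAt_of_tendsto
    (f := fun t => -(t * stdNormalPDF t / (1 + t ^ 2)))
    (f' := fun t => (1 - 2 / (1 + t ^ 2) ^ 2) * stdNormalPDF t) (a := x) (m := 0)
    (Continuous.continuousWithinAt (by
      exact ((continuous_id.mul pdf_cont).div (by continuity) (fun t => by positivity)).neg))
    (fun t _ => aux_hasDeriv t)
    aux_integrable.integrableOn
    aux_tendsto
  rw [h]; ring

lemma mill_lower {x : ℝ} (hx : 0 ≤ x) :
    x * stdNormalPDF x / (1 + x ^ 2) ≤ 1 - stdNormalCDF x := by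
  rw [one_sub_cdf, ← integral_aux_Ioi x]
  apply setIntegral_mono_on aux_integrable.integrableOn pdf_integrable.integrableOn
    measurableSet_Ioi
  intro t _
  have h3 : 0 < 2 / (1 + t ^ 2) ^ 2 := by positivity
  nlinarith [pdf_pos t]

lemma sqrt_tendsto_atTop : Tendsto Real.sqrt atTop atTop := by
  have h := tendsto_rpow_atTop (by norm_num : (0:ℝ) < 1/2)
  refine h.congr' ?_
  filter_upwards [eventually_ge_atTop (0:ℝ)] with x _
  exact (Real.sqrt_eq_rpow x).symm

lemma arg_tendsto {a : ℝ} (ha : 0 < a) (c : ℝ) :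
    Tendsto (fun n : ℝ => a * Real.sqrt n - c) atTop atTop := by
  apply tendsto_atTop_add_const_right
  exact Tendsto.const_mul_atTop ha sqrt_tendsto_atTop

lemma step1 {x s Q P : ℝ} (hs0 : 0 < s) (hx0 : 0 < x) (hP : 0 < P)
    (h : x * P / (1 + x ^ 2) ≤ Q) :
    (x / s) / (1 / s ^ 2 + (x / s) ^ 2) ≤ s * Q / P := by
  have halg : (x / s) / (1 / s ^ 2 + (x / s) ^ 2) = s * x / (1 + x ^ 2) := by
    field_simp
  rw [halg, div_le_div_iff₀ (by positivity) hP]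
  have h' : x * P ≤ Q * (1 + x ^ 2) := by
    rw [div_le_iff₀ (by positivity)] at h
    linarith
  nlinarith

lemma step2 {x s Q P : ℝ} (hs0 : 0 < s) (hx0 : 0 < x) (hP : 0 < P)
    (h : Q ≤ P / x) : s * Q / P ≤ ((x / s))⁻¹ := by
  rw [inv_div, div_le_div_iff₀ hP hx0]
  have h' : Q * x ≤ P := by
    rw [le_div_iff₀ hx0] at h
    linarith
  nlinarith

lemma mill_lim {a : ℝ} (ha : 0 < a) (c : ℝ) :
    Tendsto (fun n : ℝ => Real.sqrt n * (1 - stdNormalCDF (a * Real.sqrt n - c))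
      / stdNormalPDF (a * Real.sqrt n - c)) atTop (nhds (1 / a)) := by
  have hs : Tendsto (fun n : ℝ => Real.sqrt n) atTop atTop := sqrt_tendsto_atTop
  have hinv : Tendsto (fun n : ℝ => c / Real.sqrt n) atTop (nhds 0) := by
    simpa [div_eq_mul_inv] using (tendsto_inv_atTop_zero.comp hs).const_mul c
  have hnum : Tendsto (fun n : ℝ => a - c / Real.sqrt n) atTop (nhds a) := by
    simpa using (tendsto_const_nhds (x := a)).sub hinv
  have hinvsq : Tendsto (fun n : ℝ => 1 / (Real.sqrt n) ^ 2) atTop (nhds 0) := by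
    simpa [one_div, Function.comp_def] using (tendsto_inv_atTop_zero.comp ((tendsto_pow_atTop (two_ne_zero)).comp hs))
  -- upper bound function tendsto
  have hU : Tendsto (fun n : ℝ => (a - c / Real.sqrt n)⁻¹) atTop (nhds (1 / a)) := by
    simpa [one_div] using hnum.inv₀ (ne_of_gt ha)
  -- lower bound function tendsto
  have hL : Tendsto (fun n : ℝ =>
      (a - c / Real.sqrt n) / (1 / (Real.sqrt n) ^ 2 + (a - c / Real.sqrt n) ^ 2))
      atTop (nhds (1 / a)) := by
    have h := hnum.div (hinvsq.add (hnum.pow 2)) (by simpa using by positivity : (0 + a ^ 2) ≠ 0)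
    have : a / (0 + a ^ 2) = 1 / a := by field_simp; ring
    rwa [this] at h
  -- eventual bounds
  have hev : ∀ᶠ n : ℝ in atTop, 1 ≤ a * Real.sqrt n - c ∧ 1 ≤ Real.sqrt n :=
    ((arg_tendsto ha c).eventually_ge_atTop 1).and (hs.eventually_ge_atTop 1)
  apply tendsto_of_tendsto_of_tendsto_of_le_of_le' hL hU
  · filter_upwards [hev] with n hn
    obtain ⟨hx1, hs1⟩ := hn
    have hs0 : (0:ℝ) < Real.sqrt n := by linarith
    have hx0 : (0:ℝ) < a * Real.sqrt n - c := by linarith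
    have hxs : a - c / Real.sqrt n = (a * Real.sqrt n - c) / Real.sqrt n := by
      field_simp
    rw [hxs]
    exact step1 hs0 hx0 (pdf_pos _) (mill_lower hx0.le)
  · filter_upwards [hev] with n hn
    obtain ⟨hx1, hs1⟩ := hn
    have hs0 : (0:ℝ) < Real.sqrt n := by linarith
    have hx0 : (0:ℝ) < a * Real.sqrt n - c := by linarith
    have hxs : a - c / Real.sqrt n = (a * Real.sqrt n - c) / Real.sqrt n := by
      field_simp
    rw [hxs]
    exact step2 hs0 hx0 (pdf_pos _) (mill_upper hx0)

lemma ratio_lim_lt {a1 a2 : ℝ} (h1 : 0 < a1) (h2 : 0 < a2) {A B SA SB : ℝ → ℝ}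
    (hA : ∀ᶠ n in atTop, 0 < A n)
    (hSA : Tendsto SA atTop (nhds (1 / a1))) (hSB : Tendsto SB atTop (nhds (1 / a2)))
    (hBA : Tendsto (fun n => B n / A n) atTop (nhds 0)) :
    Tendsto (fun n => (a1 * A n + a2 * B n) / (2 * (SA n * A n + SB n * B n)))
      atTop (nhds (a1 ^ 2 / 2)) := by
  have hnum : Tendsto (fun n => a1 + a2 * (B n / A n)) atTop (nhds a1) := by
    simpa using (tendsto_const_nhds (x := a1)).add (hBA.const_mul a2)
  have hden : Tendsto (fun n => 2 * (SA n + SB n * (B n / A n))) atTop (nhds (2 * (1 / a1))) := by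
    have : Tendsto (fun n => SA n + SB n * (B n / A n)) atTop (nhds (1 / a1 + (1 / a2) * 0)) :=
      hSA.add (hSB.mul hBA)
    simpa using this.const_mul 2
  have h := hnum.div hden (by positivity)
  have hval : a1 / (2 * (1 / a1)) = a1 ^ 2 / 2 := by field_simp
  rw [hval] at h
  refine h.congr' ?_
  filter_upwards [hA] with n hAn
  have hAne : A n ≠ 0 := ne_of_gt hAn
  rw [Pi.div_apply]
  field_simp

lemma ratio_lim_eq {a : ℝ} (ha : 0 < a) {A B SA SB : ℝ → ℝ}
    (hA : ∀ᶠ n in atTop, 0 < A n) (hB : ∀ᶠ n in atTop, 0 < B n)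
    (hSA : Tendsto SA atTop (nhds (1 / a))) (hSB : Tendsto SB atTop (nhds (1 / a))) :
    Tendsto (fun n => (a * A n + a * B n) / (2 * (SA n * A n + SB n * B n)))
      atTop (nhds (a ^ 2 / 2)) := by
  have hcombot : Tendsto (fun n => SA n * (A n / (A n + B n)) + SB n * (B n / (A n + B n)))
      atTop (nhds (1 / a)) := by
    have hmin := hSA.min hSB
    have hmax := hSA.max hSB
    rw [min_self] at hmin
    rw [max_self] at hmax
    apply tendsto_of_tendsto_of_tendsto_of_le_of_le' hmin hmax
    · filter_upwards [hA, hB] with n hAn hBn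
      have hABpos : 0 < A n + B n := by linarith
      have hw1 : 0 ≤ A n / (A n + B n) := by positivity
      have hw2 : 0 ≤ B n / (A n + B n) := by positivity
      have hw : A n / (A n + B n) + B n / (A n + B n) = 1 := by field_simp
      have hle1 : min (SA n) (SB n) ≤ SA n := min_le_left _ _
      have hle2 : min (SA n) (SB n) ≤ SB n := min_le_right _ _
      have hm : (SA n ⊓ SB n) * (A n / (A n + B n)) + (SA n ⊓ SB n) * (B n / (A n + B n))
          = SA n ⊓ SB n := by rw [← mul_add, hw, mul_one]
      nlinarith [mul_nonneg (sub_nonneg.mpr hle1) hw1, mul_nonneg (sub_nonneg.mpr hle2) hw2]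
    · filter_upwards [hA, hB] with n hAn hBn
      have hABpos : 0 < A n + B n := by linarith
      have hw1 : 0 ≤ A n / (A n + B n) := by positivity
      have hw2 : 0 ≤ B n / (A n + B n) := by positivity
      have hw : A n / (A n + B n) + B n / (A n + B n) = 1 := by field_simp
      have hle1 : SA n ≤ max (SA n) (SB n) := le_max_left _ _
      have hle2 : SB n ≤ max (SA n) (SB n) := le_max_right _ _
      have hm : (SA n ⊔ SB n) * (A n / (A n + B n)) + (SA n ⊔ SB n) * (B n / (A n + B n))
          = SA n ⊔ SB n := by rw [← mul_add, hw, mul_one]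
      nlinarith [mul_nonneg (sub_nonneg.mpr hle1) hw1, mul_nonneg (sub_nonneg.mpr hle2) hw2]
  have h : Tendsto (fun n => a /
      (2 * (SA n * (A n / (A n + B n)) + SB n * (B n / (A n + B n)))))
      atTop (nhds (a / (2 * (1 / a)))) :=
    tendsto_const_nhds.div (hcombot.const_mul 2) (by positivity : (2 * (1/a)) ≠ 0)
  have hval : a / (2 * (1 / a)) = a ^ 2 / 2 := by field_simp
  rw [hval] at h
  refine h.congr' ?_
  filter_upwards [hA, hB] with n hAn hBn
  have hABpos : 0 < A n + B n := by linarith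
  have hABne : A n + B n ≠ 0 := ne_of_gt hABpos
  rw [show SA n * (A n / (A n + B n)) + SB n * (B n / (A n + B n))
      = (SA n * A n + SB n * B n) / (A n + B n) by field_simp]
  rcases eq_or_ne (SA n * A n + SB n * B n) 0 with hX | hX
  · simp [hX]
  · field_simp

lemma cdf_strictMono : StrictMono stdNormalCDF := by
  apply strictMono_of_deriv_pos
  intro x
  rw [(cdf_hasDeriv x).deriv]
  exact pdf_pos x

section
variable (aL aU c : ℝ)

lemma p_pos {aL aU : ℝ} (c : ℝ) (h : aL < aU) {n : ℝ} (hn : 0 < n) :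
    0 < stdNormalCDF (aU * Real.sqrt n - c) - stdNormalCDF (aL * Real.sqrt n - c) := by
  have hs : 0 < Real.sqrt n := Real.sqrt_pos.mpr hn
  have : aL * Real.sqrt n - c < aU * Real.sqrt n - c := by nlinarith
  linarith [cdf_strictMono this]

lemma p_lt_one {aL aU : ℝ} (c : ℝ) {n : ℝ} :
    stdNormalCDF (aU * Real.sqrt n - c) - stdNormalCDF (aL * Real.sqrt n - c) < 1 :=
  by linarith [cdf_lt_one (aU * Real.sqrt n - c), cdf_pos (aL * Real.sqrt n - c)]

lemma F_hasDeriv {aL aU : ℝ} (c : ℝ) (h : aL < aU) {n : ℝ} (hn : 0 < n) :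
    HasDerivAt (fun n : ℝ =>
        logit (stdNormalCDF (aU * Real.sqrt n - c) - stdNormalCDF (aL * Real.sqrt n - c)))
      (((stdNormalPDF (aU * Real.sqrt n - c) * (aU * (1 / (2 * Real.sqrt n))) -
          stdNormalPDF (aL * Real.sqrt n - c) * (aL * (1 / (2 * Real.sqrt n)))) /
          (stdNormalCDF (aU * Real.sqrt n - c) - stdNormalCDF (aL * Real.sqrt n - c))) +
        ((stdNormalPDF (aU * Real.sqrt n - c) * (aU * (1 / (2 * Real.sqrt n))) -
          stdNormalPDF (aL * Real.sqrt n - c) * (aL * (1 / (2 * Real.sqrt n)))) /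
          (1 - (stdNormalCDF (aU * Real.sqrt n - c) - stdNormalCDF (aL * Real.sqrt n - c)))))
      n := by
  have hsq : HasDerivAt Real.sqrt (1 / (2 * Real.sqrt n)) n := Real.hasDerivAt_sqrt (ne_of_gt hn)
  have hu : HasDerivAt (fun n : ℝ => aU * Real.sqrt n - c) (aU * (1 / (2 * Real.sqrt n))) n :=
    (hsq.const_mul aU).sub_const c
  have hl : HasDerivAt (fun n : ℝ => aL * Real.sqrt n - c) (aL * (1 / (2 * Real.sqrt n))) n :=
    (hsq.const_mul aL).sub_const c
  have hΦu := (cdf_hasDeriv (aU * Real.sqrt n - c)).comp n hu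
  have hΦl := (cdf_hasDeriv (aL * Real.sqrt n - c)).comp n hl
  have hp := hΦu.sub hΦl
  have hp0 := p_pos c h hn
  have hp1 := p_lt_one (aL := aL) (aU := aU) c (n := n)
  have hlog1 := hp.log (ne_of_gt hp0)
  have h1p : HasDerivAt (fun n : ℝ =>
      1 - (stdNormalCDF (aU * Real.sqrt n - c) - stdNormalCDF (aL * Real.sqrt n - c)))
      (-(stdNormalPDF (aU * Real.sqrt n - c) * (aU * (1 / (2 * Real.sqrt n))) -
        stdNormalPDF (aL * Real.sqrt n - c) * (aL * (1 / (2 * Real.sqrt n))))) n := hp.const_sub 1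
  have hlog2 := h1p.log (ne_of_gt (by linarith))
  have hF := hlog1.sub hlog2
  simp only [Function.comp_def, Pi.sub_apply] at hF
  exact hF.congr_deriv (by rw [neg_div, sub_neg_eq_add])
end

lemma pdf_even (t : ℝ) : stdNormalPDF (-t) = stdNormalPDF t := by
  unfold stdNormalPDF; rw [neg_pow]; norm_num

lemma cdf_neg (x : ℝ) : stdNormalCDF (-x) = 1 - stdNormalCDF x := by
  have h := integral_comp_neg_Iic (-x) stdNormalPDF
  rw [neg_neg] at h
  rw [one_sub_cdf, ← h]
  unfold stdNormalCDF
  exact (setIntegral_congr_fun measurableSet_Iic fun t _ => (pdf_even t).symm)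

lemma pdf_ratio (x y : ℝ) : stdNormalPDF x / stdNormalPDF y = Real.exp ((y ^ 2 - x ^ 2) / 2) := by
  unfold stdNormalPDF
  rw [mul_div_mul_left _ _ (inv_ne_zero (by positivity)), ← Real.exp_sub]
  congr 1; ring

lemma inv2sqrt_tendsto : Tendsto (fun n : ℝ => 1 / (2 * Real.sqrt n)) atTop (nhds 0) := by
  apply Tendsto.const_div_atTop
  exact Tendsto.const_mul_atTop two_pos sqrt_tendsto_atTop

lemma Q_tendsto {a : ℝ} (ha : 0 < a) (c : ℝ) :
    Tendsto (fun n : ℝ => 1 - stdNormalCDF (a * Real.sqrt n - c)) atTop (nhds 0) := by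
  apply tendsto_of_tendsto_of_tendsto_of_le_of_le' tendsto_const_nhds
    ((pdf_tendsto_zero.comp (arg_tendsto ha c)).div_atTop (arg_tendsto ha c))
  · exact Eventually.of_forall fun n => by linarith [cdf_lt_one (a * Real.sqrt n - c)]
  · filter_upwards [(arg_tendsto ha c).eventually_gt_atTop 0] with n hn
    exact mill_upper hn

/-- Let `a_L < 0 < a_U` and `c ∈ ℝ`, and let
`F(n) = logit(Φ(a_U·√n − c) − Φ(a_L·√n − c))`.
Then `F′(n) → (1/2)·min{a_U², a_L²}` as `n → ∞`. -/
theorem tendsto_deriv_logit_interval_inside (aL aU c : ℝ) (haL : aL < 0) (haU : 0 < aU) :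
    Tendsto
      (deriv fun n : ℝ =>
        logit (stdNormalCDF (aU * Real.sqrt n - c) - stdNormalCDF (aL * Real.sqrt n - c)))
      atTop (nhds (1 / 2 * min (aU ^ 2) (aL ^ 2))) := by
  have hb : 0 < -aL := by linarith
  have hLU : aL < aU := by linarith
  -- abbreviations
  set b := -aL with hbdef
  have hlv : ∀ n : ℝ, aL * Real.sqrt n - c = -(b * Real.sqrt n - -c) := by
    intro n; rw [hbdef]; ring
  -- pd, p
  have hpd : Tendsto (fun n : ℝ =>
      stdNormalPDF (aU * Real.sqrt n - c) * (aU * (1 / (2 * Real.sqrt n))) -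
      stdNormalPDF (aL * Real.sqrt n - c) * (aL * (1 / (2 * Real.sqrt n))))
      atTop (nhds 0) := by
    have h1 : Tendsto (fun n : ℝ => stdNormalPDF (aU * Real.sqrt n - c)) atTop (nhds 0) :=
      pdf_tendsto_zero.comp (arg_tendsto haU c)
    have h2 : Tendsto (fun n : ℝ => stdNormalPDF (aL * Real.sqrt n - c)) atTop (nhds 0) := by
      have := pdf_tendsto_zero.comp (arg_tendsto hb (-c))
      refine this.congr fun n => ?_
      simp only [Function.comp]
      rw [← pdf_even, ← hlv n]
    have h3 := inv2sqrt_tendsto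
    have := ((h1.mul (h3.const_mul aU)).sub (h2.mul (h3.const_mul aL)))
    simpa using this
  have hp1 : Tendsto (fun n : ℝ =>
      stdNormalCDF (aU * Real.sqrt n - c) - stdNormalCDF (aL * Real.sqrt n - c))
      atTop (nhds 1) := by
    have hQA := Q_tendsto haU c
    have hQB := Q_tendsto hb (-c)
    have h : Tendsto (fun n : ℝ =>
        (1 - (1 - stdNormalCDF (aU * Real.sqrt n - c))) - (1 - stdNormalCDF (b * Real.sqrt n - -c)))
        atTop (nhds ((1 - 0) - 0)) := (tendsto_const_nhds.sub hQA).sub hQB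
    norm_num at h
    refine h.congr fun n => ?_
    rw [hlv n, cdf_neg]
    ring
  -- Term 1
  have hT1 : Tendsto (fun n : ℝ =>
      (stdNormalPDF (aU * Real.sqrt n - c) * (aU * (1 / (2 * Real.sqrt n))) -
        stdNormalPDF (aL * Real.sqrt n - c) * (aL * (1 / (2 * Real.sqrt n)))) /
      (stdNormalCDF (aU * Real.sqrt n - c) - stdNormalCDF (aL * Real.sqrt n - c)))
      atTop (nhds 0) := by
    have := hpd.div hp1 one_ne_zero
    simpa [Pi.div_def] using this
  -- Term 2 : rewrite as ratio and use ratio lemmas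
  have hSA := mill_lim haU c
  have hSB := mill_lim hb (-c)
  have hApos : ∀ᶠ n : ℝ in atTop, 0 < stdNormalPDF (aU * Real.sqrt n - c) :=
    Eventually.of_forall fun n => pdf_pos _
  have hBpos : ∀ᶠ n : ℝ in atTop, 0 < stdNormalPDF (b * Real.sqrt n - -c) :=
    Eventually.of_forall fun n => pdf_pos _
  -- the target value of term 2
  have hmin : 1 / 2 * min (aU ^ 2) (aL ^ 2) = (min aU b) ^ 2 / 2 := by
    rcases le_total aU b with h | h
    · rw [min_eq_left h, min_eq_left (by nlinarith : aU ^ 2 ≤ aL ^ 2)]; ring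
    · rw [min_eq_right h, min_eq_right (by nlinarith : aL ^ 2 ≤ aU ^ 2)]
      rw [hbdef]; ring
  have hT2R : Tendsto (fun n : ℝ =>
      (aU * stdNormalPDF (aU * Real.sqrt n - c) + b * stdNormalPDF (b * Real.sqrt n - -c)) /
      (2 * ((Real.sqrt n * (1 - stdNormalCDF (aU * Real.sqrt n - c)) / stdNormalPDF (aU * Real.sqrt n - c)) * stdNormalPDF (aU * Real.sqrt n - c) +
            (Real.sqrt n * (1 - stdNormalCDF (b * Real.sqrt n - -c)) / stdNormalPDF (b * Real.sqrt n - -c)) * stdNormalPDF (b * Real.sqrt n - -c))))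
      atTop (nhds ((min aU b) ^ 2 / 2)) := by
    rcases lt_trichotomy aU b with hc | hc | hc
    · rw [min_eq_left hc.le]
      apply ratio_lim_lt haU hb hApos hSA hSB
      -- B/A → 0
      have hBAeq : ∀ᶠ n : ℝ in atTop,
          stdNormalPDF (b * Real.sqrt n - -c) / stdNormalPDF (aU * Real.sqrt n - c)
          = Real.exp (Real.sqrt n * (((aU ^ 2 - b ^ 2) * Real.sqrt n - 2 * c * (aU + b)) / 2)) := by
        filter_upwards [eventually_ge_atTop (0:ℝ)] with n hn
        rw [pdf_ratio]
        congr 1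
        have hss : Real.sqrt n * Real.sqrt n = n := Real.mul_self_sqrt hn
        nlinarith [hss]
      have hinner : Tendsto (fun n : ℝ =>
          ((aU ^ 2 - b ^ 2) * Real.sqrt n - 2 * c * (aU + b)) / 2) atTop atBot := by
        apply Tendsto.atBot_div_const two_pos
        apply tendsto_atBot_add_const_right
        exact Tendsto.const_mul_atTop_of_neg (by nlinarith) sqrt_tendsto_atTop
      have hprod : Tendsto (fun n : ℝ =>
          Real.sqrt n * (((aU ^ 2 - b ^ 2) * Real.sqrt n - 2 * c * (aU + b)) / 2)) atTop atBot :=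
        sqrt_tendsto_atTop.atTop_mul_atBot₀ hinner
      have := Real.tendsto_exp_atBot.comp hprod
      exact (this.congr' (Filter.EventuallyEq.symm hBAeq))
    · subst hc
      rw [min_self]
      exact ratio_lim_eq haU hApos hBpos hSA hSB
    · rw [min_eq_right hc.le]
      have hmain := ratio_lim_lt hb haU hBpos hSB hSA (B := fun n => stdNormalPDF (aU * Real.sqrt n - c)) ?_
      · refine hmain.congr fun n => ?_
        rw [add_comm (b * _), add_comm ((Real.sqrt n * _ / _) * _)]
      · -- A/B → 0
        have hBAeq : ∀ᶠ n : ℝ in atTop,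
            stdNormalPDF (aU * Real.sqrt n - c) / stdNormalPDF (b * Real.sqrt n - -c)
            = Real.exp (Real.sqrt n * (((b ^ 2 - aU ^ 2) * Real.sqrt n + 2 * c * (aU + b)) / 2)) := by
          filter_upwards [eventually_ge_atTop (0:ℝ)] with n hn
          rw [pdf_ratio]
          congr 1
          have hss : Real.sqrt n * Real.sqrt n = n := Real.mul_self_sqrt hn
          nlinarith [hss]
        have hinner : Tendsto (fun n : ℝ =>
            ((b ^ 2 - aU ^ 2) * Real.sqrt n + 2 * c * (aU + b)) / 2) atTop atBot := by
          apply Tendsto.atBot_div_const two_pos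
          apply tendsto_atBot_add_const_right
          exact Tendsto.const_mul_atTop_of_neg (by nlinarith) sqrt_tendsto_atTop
        have hprod : Tendsto (fun n : ℝ =>
            Real.sqrt n * (((b ^ 2 - aU ^ 2) * Real.sqrt n + 2 * c * (aU + b)) / 2)) atTop atBot :=
          sqrt_tendsto_atTop.atTop_mul_atBot₀ hinner
        have := Real.tendsto_exp_atBot.comp hprod
        exact (this.congr' (Filter.EventuallyEq.symm hBAeq))
  -- Term 2 : the actual expression
  have hT2 : Tendsto (fun n : ℝ =>
      (stdNormalPDF (aU * Real.sqrt n - c) * (aU * (1 / (2 * Real.sqrt n))) -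
        stdNormalPDF (aL * Real.sqrt n - c) * (aL * (1 / (2 * Real.sqrt n)))) /
      (1 - (stdNormalCDF (aU * Real.sqrt n - c) - stdNormalCDF (aL * Real.sqrt n - c))))
      atTop (nhds ((min aU b) ^ 2 / 2)) := by
    refine hT2R.congr' ?_
    filter_upwards [eventually_gt_atTop (0:ℝ)] with n hn
    have hs : 0 < Real.sqrt n := Real.sqrt_pos.mpr hn
    have hA := pdf_pos (aU * Real.sqrt n - c)
    have hB := pdf_pos (b * Real.sqrt n - -c)
    have hQA : 0 < 1 - stdNormalCDF (aU * Real.sqrt n - c) := by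
      linarith [cdf_lt_one (aU * Real.sqrt n - c)]
    have hQB : 0 < 1 - stdNormalCDF (b * Real.sqrt n - -c) := by
      linarith [cdf_lt_one (b * Real.sqrt n - -c)]
    have hSAA : Real.sqrt n * (1 - stdNormalCDF (aU * Real.sqrt n - c)) /
        stdNormalPDF (aU * Real.sqrt n - c) * stdNormalPDF (aU * Real.sqrt n - c)
        = Real.sqrt n * (1 - stdNormalCDF (aU * Real.sqrt n - c)) :=
      div_mul_cancel₀ _ (ne_of_gt hA)
    have hSBB : Real.sqrt n * (1 - stdNormalCDF (b * Real.sqrt n - -c)) /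
        stdNormalPDF (b * Real.sqrt n - -c) * stdNormalPDF (b * Real.sqrt n - -c)
        = Real.sqrt n * (1 - stdNormalCDF (b * Real.sqrt n - -c)) :=
      div_mul_cancel₀ _ (ne_of_gt hB)
    rw [hSAA, hSBB]
    -- numerator equality and denominator equality
    have hnum : stdNormalPDF (aU * Real.sqrt n - c) * (aU * (1 / (2 * Real.sqrt n))) -
        stdNormalPDF (aL * Real.sqrt n - c) * (aL * (1 / (2 * Real.sqrt n)))
        = (aU * stdNormalPDF (aU * Real.sqrt n - c) + b * stdNormalPDF (b * Real.sqrt n - -c)) *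
          (1 / (2 * Real.sqrt n)) := by
      rw [hlv n, pdf_even, hbdef]
      ring
    have hden : 1 - (stdNormalCDF (aU * Real.sqrt n - c) - stdNormalCDF (aL * Real.sqrt n - c))
        = (1 - stdNormalCDF (aU * Real.sqrt n - c)) + (1 - stdNormalCDF (b * Real.sqrt n - -c)) := by
      rw [hlv n, cdf_neg]
      ring
    rw [hnum, hden]
    rw [show 2 * (Real.sqrt n * (1 - stdNormalCDF (aU * Real.sqrt n - c)) +
          Real.sqrt n * (1 - stdNormalCDF (b * Real.sqrt n - -c)))
        = (2 * Real.sqrt n) * ((1 - stdNormalCDF (aU * Real.sqrt n - c)) +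
            (1 - stdNormalCDF (b * Real.sqrt n - -c))) by ring]
    rw [div_mul_eq_div_div, mul_one_div]
  -- assemble
  have hsum := hT1.add hT2
  rw [zero_add] at hsum
  rw [hmin]
  refine hsum.congr' ?_
  filter_upwards [eventually_gt_atTop (0:ℝ)] with n hn
  exact ((F_hasDeriv c hLU hn).deriv).symm
end Aux
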